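/- Under the error bound property with constants M = f* − d(x^{0,0}) and κ > 0, the restarted dual fast gradient algorithm (R-DFG) converges globally linearly in dual objective values: for any c ∈ (0,1), if the restart length satisfies K_c + 1 ≥ 2κ/c, then f* − d(x^{0,p}) ≤ c^{2p} · (f* − d(x^{0,0})) for all p ≥ 0. -/

import Mathlib

/-!
Since the Lagrangian is `σ_f`-strongly convex in `u`, it grows quadratically away from its
minimiser `u(x)`; with Cauchy–Schwarz this makes the dual function `d` concave with a
`‖G‖² / σ_f`-Lipschitz gradient, expressed by the two first-order bounds. For such a function
Nesterov's estimate sequence shows that `K` fast gradient steps from `x₀` leave a dual gap of at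
most `L ‖x₀ - x*‖² / (2 θ_K²)`. The error bound turns `‖x₀ - x*‖²` into `κ²` times the squared
gradient mapping at `x₀`, and one projected gradient step bounds `L / 2` times that by the gap at
`x₀`. As `θ_K ≥ (K + 1) / 2 ≥ κ / c`, each restart multiplies the gap by at most `c²`, and the
error bound stays applicable because the gap never grows.
-/

open scoped RealInnerProductSpace

open Filter Topology

lemma le_of_forall_one_sub_mul_le {C D : ℝ} (h : ∀ t : ℝ, 0 < t → t ≤ 1 → (1 - t) * C ≤ D) :
    C ≤ D := by
  have hlim : Tendsto (fun t : ℝ ↦ (1 - t) * C) (𝓝[>] 0) (𝓝 C) := by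
    have : Continuous fun t : ℝ ↦ (1 - t) * C := by fun_prop
    simpa using (this.tendsto 0).mono_left nhdsWithin_le_nhds
  refine le_of_tendsto hlim ?_
  filter_upwards [Ioc_mem_nhdsGT one_pos] with t ht using h t ht.1 ht.2

lemma le_pow_mul_of_forall_le_mul {r : ℝ} (hr0 : 0 ≤ r) (hr1 : r ≤ 1) {a : ℕ → ℝ}
    (ha0 : 0 ≤ a 0) (h : ∀ q, a q ≤ a 0 → a (q + 1) ≤ r * a q) (q : ℕ) :
    a q ≤ r ^ q * a 0 := by
  induction q with
  | zero => simp
  | succ q ih =>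
    calc a (q + 1) ≤ r * a q := h q (ih.trans (mul_le_of_le_one_left ha0 (pow_le_one₀ hr0 hr1)))
      _ ≤ r * (r ^ q * a 0) := by gcongr
      _ = r ^ (q + 1) * a 0 := by ring

section InnerProductSpace

variable {F : Type*} [NormedAddCommGroup F] [InnerProductSpace ℝ F]

lemma StrongConvexOn.subset {s t : Set F} {σ : ℝ} {φ : F → ℝ} (hφ : StrongConvexOn t σ φ)
    (hst : s ⊆ t) (hs : Convex ℝ s) : StrongConvexOn s σ φ :=
  ⟨hs, fun _ hx _ hy ↦ hφ.2 (hst hx) (hst hy)⟩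

lemma StrongConvexOn.add_sq_norm_sub_le_of_isMinOn {U : Set F} {σ : ℝ} {φ : F → ℝ}
    (hφ : StrongConvexOn U σ φ) {m u : F} (hm : m ∈ U) (hmin : IsMinOn φ U m) (hu : u ∈ U) :
    φ m + σ / 2 * ‖u - m‖ ^ 2 ≤ φ u := by
  suffices σ / 2 * ‖u - m‖ ^ 2 ≤ φ u - φ m by linarith
  refine le_of_forall_one_sub_mul_le fun t ht0 ht1 ↦ ?_
  have hconv := hφ.2 hm hu (sub_nonneg.2 ht1) ht0.le (sub_add_cancel 1 t)
  have hle : φ m ≤ φ ((1 - t) • m + t • u) :=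
    hmin (hφ.1 hm hu (sub_nonneg.2 ht1) ht0.le (sub_add_cancel 1 t))
  rw [norm_sub_rev] at hconv
  simp only [smul_eq_mul] at hconv
  nlinarith

def IsNearestPointMap (S : Set F) (P : F → F) : Prop :=
  ∀ z, P z ∈ S ∧ ∀ w ∈ S, ‖z - P z‖ ≤ ‖z - w‖

lemma IsNearestPointMap.inner_sub_le_zero {S : Set F} {P : F → F} (hP : IsNearestPointMap S P)
    (hS : Convex ℝ S) (z : F) {w : F} (hw : w ∈ S) : ⟪z - P z, w - P z⟫ ≤ 0 := by
  have hbdd : BddBelow (Set.range fun v : S ↦ ‖z - v‖) :=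
    ⟨0, by rintro _ ⟨v, rfl⟩; exact norm_nonneg _⟩
  have : Nonempty S := ⟨⟨P z, (hP z).1⟩⟩
  refine (norm_eq_iInf_iff_real_inner_le_zero hS (hP z).1).1 ?_ w hw
  exact le_antisymm (le_ciInf fun v ↦ (hP z).2 v v.2) (ciInf_le hbdd ⟨P z, (hP z).1⟩)

lemma convex_dualCone (K : Set F) : Convex ℝ {x : F | ∀ v ∈ K, 0 ≤ ⟪x, v⟫} := by
  intro x hx y hy a b ha hb _ v hv
  simp only [inner_add_left, real_inner_smul_left]
  exact add_nonneg (mul_nonneg ha (hx v hv)) (mul_nonneg hb (hy v hv))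

/-- `Dg` plays the role of `∇d`: concavity and `L`-smoothness of `d` enter only through these two
first-order bounds, so no differentiability is needed. -/
structure IsSmoothConcave (L : ℝ) (d : F → ℝ) (Dg : F → F) : Prop where
  le_add_inner : ∀ x y, d y ≤ d x + ⟪y - x, Dg x⟫
  add_inner_sub_le : ∀ x y, d x + ⟪y - x, Dg x⟫ - L / 2 * ‖y - x‖ ^ 2 ≤ d y

end InnerProductSpace

section Lagrangian

variable {E H : Type*} [NormedAddCommGroup E] [InnerProductSpace ℝ E]
  [NormedAddCommGroup H] [InnerProductSpace ℝ H]
  {f : E → ℝ} {σ : ℝ} {U : Set E} {G : E →L[ℝ] H} {g : H} {uu : H → E}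

noncomputable def lagrangian (f : E → ℝ) (G : E →L[ℝ] H) (g : H) (u : E) (x : H) : ℝ :=
  f u + ⟪x, -(G u) - g⟫

lemma lagrangian_eq_add_inner (u : E) (x y : H) :
    lagrangian f G g u y = lagrangian f G g u x + ⟪y - x, -(G u) - g⟫ := by
  simp only [lagrangian, inner_sub_left]
  ring

lemma strongConvexOn_lagrangian (hf : StrongConvexOn U σ f) (G : E →L[ℝ] H) (g : H) (x : H) :
    StrongConvexOn U σ fun u ↦ lagrangian f G g u x := by
  have haff : ConvexOn ℝ U fun u ↦ ⟪x, -(G u) - g⟫ := by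
    refine ⟨hf.1, fun u _ v _ a b _ _ hab ↦ le_of_eq ?_⟩
    simp only [map_add, map_smul, inner_sub_right, inner_neg_right, inner_add_right,
      real_inner_smul_right, smul_eq_mul]
    linear_combination ⟪x, g⟫ * hab
  rw [strongConvexOn_iff_convex] at hf ⊢
  refine (hf.add haff).congr fun u _ ↦ ?_
  simp only [lagrangian, Pi.add_apply]
  ring

lemma lagrangian_le_of_feasible
    (huu : ∀ x, uu x ∈ U ∧ ∀ u ∈ U, lagrangian f G g (uu x) x ≤ lagrangian f G g u x)
    {K : Set H} {x : H} (hx : ∀ v ∈ K, 0 ≤ ⟪x, v⟫) {u : E} (hu : u ∈ U) (hfeas : G u + g ∈ K) :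
    lagrangian f G g (uu x) x ≤ f u := by
  have hlag : lagrangian f G g u x = f u - ⟪x, G u + g⟫ := by
    rw [lagrangian, ← neg_add', inner_neg_right, sub_eq_add_neg]
  linarith [(huu x).2 u hu, hx _ hfeas]

lemma isSmoothConcave_dual (hσ : 0 < σ) (hf : StrongConvexOn U σ f)
    (huu : ∀ x, uu x ∈ U ∧ ∀ u ∈ U, lagrangian f G g (uu x) x ≤ lagrangian f G g u x) :
    IsSmoothConcave (‖G‖ ^ 2 / σ) (fun x ↦ lagrangian f G g (uu x) x)
      (fun x ↦ -(G (uu x)) - g) where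
  le_add_inner x y := by
    rw [← lagrangian_eq_add_inner]
    exact (huu y).2 _ (huu x).1
  add_inner_sub_le x y := by
    set a := ‖uu y - uu x‖
    set b := ‖y - x‖
    have hgrowth : lagrangian f G g (uu x) x + σ / 2 * a ^ 2 ≤ lagrangian f G g (uu y) x :=
      (strongConvexOn_lagrangian hf G g x).add_sq_norm_sub_le_of_isMinOn (huu x).1
        (fun u hu ↦ (huu x).2 u hu) (huu y).1
    have hsplit : ⟪y - x, -(G (uu y)) - g⟫
        = ⟪y - x, -(G (uu x)) - g⟫ - ⟪y - x, G (uu y - uu x)⟫ := by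
      rw [← inner_sub_right, map_sub]
      congr 1
      abel
    have hcs : ⟪y - x, G (uu y - uu x)⟫ ≤ ‖G‖ * b * a := by
      calc ⟪y - x, G (uu y - uu x)⟫ ≤ b * ‖G (uu y - uu x)‖ := real_inner_le_norm _ _
        _ ≤ b * (‖G‖ * a) := by gcongr; exact G.le_opNorm _
        _ = ‖G‖ * b * a := by ring
    have hamgm : σ / 2 * a ^ 2 + ‖G‖ ^ 2 / σ / 2 * b ^ 2 - ‖G‖ * b * a
        = (σ * a - ‖G‖ * b) ^ 2 / (2 * σ) := by
      field_simp
      ring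
    have : 0 ≤ (σ * a - ‖G‖ * b) ^ 2 / (2 * σ) := by positivity
    rw [lagrangian_eq_add_inner (uu y) x y]
    linarith

end Lagrangian

structure IsNesterovSeq (θ : ℕ → ℝ) : Prop where
  zero : θ 0 = 0
  one : θ 1 = 1
  succ : ∀ k, 1 ≤ k → θ (k + 1) = (1 + Real.sqrt (1 + 4 * θ k ^ 2)) / 2

namespace IsNesterovSeq

variable {θ : ℕ → ℝ}

lemma add_two_div_two_le (hθ : IsNesterovSeq θ) (k : ℕ) : ((k : ℝ) + 2) / 2 ≤ θ (k + 1) := by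
  induction k with
  | zero => simp [hθ.one]
  | succ k ih =>
    have hsqrt : 2 * θ (k + 1) ≤ Real.sqrt (1 + 4 * θ (k + 1) ^ 2) :=
      Real.le_sqrt_of_sq_le (by nlinarith)
    rw [hθ.succ (k + 1) k.succ_pos]
    push_cast
    linarith

lemma one_le (hθ : IsNesterovSeq θ) (k : ℕ) : 1 ≤ θ (k + 1) := by
  have := hθ.add_two_div_two_le k
  have : (0 : ℝ) ≤ k := k.cast_nonneg
  linarith

lemma sq_sub_self (hθ : IsNesterovSeq θ) (k : ℕ) : θ (k + 1) ^ 2 - θ (k + 1) = θ k ^ 2 := by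
  cases k with
  | zero => simp [hθ.zero, hθ.one]
  | succ k =>
    rw [hθ.succ (k + 1) k.succ_pos]
    linear_combination Real.sq_sqrt (by positivity : (0 : ℝ) ≤ 1 + 4 * θ (k + 1) ^ 2) / 4

end IsNesterovSeq

section ProjectedGradient

variable {F : Type*} [NormedAddCommGroup F] [InnerProductSpace ℝ F]
  {S : Set F} {P : F → F} {L : ℝ} {d : F → ℝ} {Dg : F → F}

noncomputable def projGradStep (P Dg : F → F) (L : ℝ) (y : F) : F := P (y + (1 / L) • Dg y)

lemma IsNearestPointMap.projGradStep_mem (hP : IsNearestPointMap S P) (Dg : F → F) (L : ℝ)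
    (y : F) : projGradStep P Dg L y ∈ S :=
  (hP _).1

lemma IsSmoothConcave.le_projGradStep (hd : IsSmoothConcave L d Dg) (hL : 0 < L)
    (hS : Convex ℝ S) (hP : IsNearestPointMap S P) (y : F) {z : F} (hz : z ∈ S) :
    d z - L * ⟪projGradStep P Dg L y - y, z - projGradStep P Dg L y⟫
      - L / 2 * ‖projGradStep P Dg L y - y‖ ^ 2 ≤ d (projGradStep P Dg L y) := by
  set x := projGradStep P Dg L y
  have hVI : ⟪(y - x) + (1 / L) • Dg y, z - x⟫ ≤ 0 := by
    rw [sub_add_eq_add_sub]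
    exact hP.inner_sub_le_zero hS (y + (1 / L) • Dg y) hz
  have hVI' : ⟪z - x, Dg y⟫ ≤ L * ⟪x - y, z - x⟫ := by
    rw [inner_add_left, real_inner_smul_left, ← neg_sub x y, inner_neg_left,
      real_inner_comm (z - x) (Dg y)] at hVI
    have := mul_le_mul_of_nonneg_left hVI hL.le
    rw [mul_add, ← mul_assoc, mul_one_div_cancel hL.ne', one_mul, mul_zero] at this
    linarith
  have hsplit : ⟪z - y, Dg y⟫ = ⟪z - x, Dg y⟫ + ⟪x - y, Dg y⟫ := by
    rw [← inner_add_left, sub_add_sub_cancel]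
  linarith [hd.le_add_inner y z, hd.add_inner_sub_le y x]

lemma IsSmoothConcave.sq_norm_projGradStep_sub_le (hd : IsSmoothConcave L d Dg) (hL : 0 < L)
    (hS : Convex ℝ S) (hP : IsNearestPointMap S P) {xs y : F} (hmax : IsMaxOn d S xs)
    (hy : y ∈ S) :
    L / 2 * ‖projGradStep P Dg L y - y‖ ^ 2 ≤ d xs - d y := by
  have h := hd.le_projGradStep hL hS hP y hy
  rw [← neg_sub (projGradStep P Dg L y) y, inner_neg_right, real_inner_self_eq_norm_sq] at h
  linarith [isMaxOn_iff.1 hmax _ (hP.projGradStep_mem Dg L y)]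

lemma IsSmoothConcave.norm_projGradStep_sub_le (hd : IsSmoothConcave L d Dg) (hL : 0 < L)
    (hS : Convex ℝ S) (hP : IsNearestPointMap S P) {xs : F} (hxs : xs ∈ S)
    (hmax : IsMaxOn d S xs) (y : F) :
    ‖projGradStep P Dg L y - y‖ ≤ 2 * ‖y - xs‖ := by
  have h := hd.le_projGradStep hL hS hP y hxs
  have hmax' := isMaxOn_iff.1 hmax _ (hP.projGradStep_mem Dg L y)
  set a := projGradStep P Dg L y - y
  have hsplit : xs - projGradStep P Dg L y = (xs - y) - a :=
    (sub_sub_sub_cancel_right _ _ _).symm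
  rw [hsplit, inner_sub_right, real_inner_self_eq_norm_sq] at h
  have hhalf : ‖a‖ ^ 2 / 2 ≤ ⟪a, xs - y⟫ := le_of_mul_le_mul_left (by nlinarith) hL
  have hinner : ⟪a, xs - y⟫ ≤ ‖a‖ * ‖y - xs‖ := by
    rw [norm_sub_rev y xs]
    exact real_inner_le_norm _ _
  nlinarith [norm_nonneg a, norm_nonneg (y - xs)]

/-- One step of Nesterov's estimate sequence, with `ν = θ_{k+1}`, `u = x_k` and `v = y_{k+1}`:
the descent inequality at `z = u` with weight `ν (ν - 1)` plus the one at `z = xs` with weight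
`ν`. -/
lemma IsSmoothConcave.fista_potential_step (hd : IsSmoothConcave L d Dg) (hL : 0 < L)
    (hS : Convex ℝ S) (hP : IsNearestPointMap S P) {xs u v : F} (hxs : xs ∈ S) (hu : u ∈ S)
    {ν : ℝ} (hν : 1 ≤ ν) :
    ν ^ 2 * (d xs - d (projGradStep P Dg L v))
        + L / 2 * ‖ν • projGradStep P Dg L v - (ν - 1) • u - xs‖ ^ 2
      ≤ (ν ^ 2 - ν) * (d xs - d u) + L / 2 * ‖ν • v - (ν - 1) • u - xs‖ ^ 2 := by
  have hu' := hd.le_projGradStep hL hS hP v hu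
  have hxs' := hd.le_projGradStep hL hS hP v hxs
  set x := projGradStep P Dg L v
  set w := x - v
  set A := ν • x - (ν - 1) • u - xs
  have hB : ν • v - (ν - 1) • u - xs = A - ν • w := by module
  have hnormB : ‖A - ν • w‖ ^ 2 = ‖A‖ ^ 2 - 2 * (ν * ⟪w, A⟫) + ν ^ 2 * ‖w‖ ^ 2 := by
    rw [norm_sub_sq_real, real_inner_smul_right, real_inner_comm A w, norm_smul,
      Real.norm_eq_abs, mul_pow, sq_abs]
  have hinnerA : ν * ⟪w, A⟫ = -(ν * (ν - 1) * ⟪w, u - x⟫ + ν * ⟪w, xs - x⟫) := by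
    simp only [A, inner_sub_right, real_inner_smul_right]
    ring
  have t1 := mul_le_mul_of_nonneg_left hu' (by nlinarith : 0 ≤ ν * (ν - 1))
  have t2 := mul_le_mul_of_nonneg_left hxs' (by linarith : 0 ≤ ν)
  rw [hB, hnormB]
  nlinarith [t1, t2, hinnerA]

structure IsFistaRun (P Dg : F → F) (L : ℝ) (θ : ℕ → ℝ) (x y : ℕ → F) : Prop where
  y_one : y 1 = x 0
  x_succ : ∀ k, x (k + 1) = projGradStep P Dg L (y (k + 1))
  y_succ : ∀ k, y (k + 2) = x (k + 1) + ((θ (k + 1) - 1) / θ (k + 2)) • (x (k + 1) - x k)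

lemma IsFistaRun.mem {θ : ℕ → ℝ} {x y : ℕ → F} (hrun : IsFistaRun P Dg L θ x y)
    (hP : IsNearestPointMap S P) (hx0 : x 0 ∈ S) : ∀ k, x k ∈ S
  | 0 => hx0
  | k + 1 => hrun.x_succ k ▸ hP.projGradStep_mem Dg L _

lemma IsSmoothConcave.fista_potential_le (hd : IsSmoothConcave L d Dg) (hL : 0 < L)
    (hS : Convex ℝ S) (hP : IsNearestPointMap S P) {θ : ℕ → ℝ} (hθ : IsNesterovSeq θ)
    {x y : ℕ → F} (hrun : IsFistaRun P Dg L θ x y) (hx0 : x 0 ∈ S) {xs : F} (hxs : xs ∈ S)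
    (k : ℕ) :
    θ (k + 1) ^ 2 * (d xs - d (x (k + 1)))
        + L / 2 * ‖θ (k + 1) • x (k + 1) - (θ (k + 1) - 1) • x k - xs‖ ^ 2
      ≤ L / 2 * ‖x 0 - xs‖ ^ 2 := by
  have hstep := fun k ↦ hrun.x_succ k ▸ hd.fista_potential_step hL hS hP
    (v := y (k + 1)) hxs (hrun.mem hP hx0 k) (hθ.one_le k)
  induction k with
  | zero =>
    simpa [hθ.zero, hθ.one, hrun.y_one] using hstep 0
  | succ k ih =>
    have hmomentum : θ (k + 2) • y (k + 2) - (θ (k + 2) - 1) • x (k + 1)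
        = θ (k + 1) • x (k + 1) - (θ (k + 1) - 1) • x k := by
      rw [hrun.y_succ, smul_add, smul_smul, mul_div_cancel₀ _ (by linarith [hθ.one_le (k + 1)])]
      module
    have h := hstep (k + 1)
    rw [hθ.sq_sub_self, hmomentum] at h
    linarith

lemma IsSmoothConcave.fista_restart_contraction (hd : IsSmoothConcave L d Dg) (hL : 0 < L)
    (hS : Convex ℝ S) (hP : IsNearestPointMap S P) {θ : ℕ → ℝ} (hθ : IsNesterovSeq θ)
    {x y : ℕ → F} (hrun : IsFistaRun P Dg L θ x y) (hx0 : x 0 ∈ S) {xs : F} (hxs : xs ∈ S)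
    (hmax : IsMaxOn d S xs) {κ c : ℝ} (hκ : 0 ≤ κ) (hc0 : 0 < c) (hc1 : c < 1) {K : ℕ}
    (hK : 2 * κ / c ≤ K + 1) (hEB : ‖x 0 - xs‖ ≤ κ * ‖projGradStep P Dg L (x 0) - x 0‖) :
    d xs - d (x K) ≤ c ^ 2 * (d xs - d (x 0)) := by
  have hgap := hd.sq_norm_projGradStep_sub_le hL hS hP hmax hx0
  cases K with
  | zero =>
    -- Here `2 κ ≤ c < 1`, so the error bound forces `x 0 = xs`.
    have h2κ : 2 * κ ≤ c := by rwa [Nat.cast_zero, zero_add, div_le_one hc0] at hK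
    have hstep := hd.norm_projGradStep_sub_le hL hS hP hxs hmax (x 0)
    have : ‖x 0 - xs‖ ≤ c * ‖x 0 - xs‖ := by nlinarith [norm_nonneg (x 0 - xs)]
    have : x 0 = xs := by
      rw [← sub_eq_zero, ← norm_le_zero_iff]
      nlinarith [norm_nonneg (x 0 - xs)]
    simp [this]
  | succ k =>
    have hpot := hd.fista_potential_le hL hS hP hθ hrun hx0 hxs k
    have hθk := hθ.add_two_div_two_le k
    have hκθ : κ ≤ c * θ (k + 1) := by
      rw [div_le_iff₀ hc0] at hK
      push_cast at hK
      nlinarith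
    have hEB2 : ‖x 0 - xs‖ ^ 2 ≤ κ ^ 2 * ‖projGradStep P Dg L (x 0) - x 0‖ ^ 2 := by
      rw [← mul_pow]
      gcongr
    have hθpos : 0 < θ (k + 1) := by linarith [hθ.one_le k]
    have hgap0 : 0 ≤ d xs - d (x 0) := le_trans (by positivity) hgap
    have : θ (k + 1) ^ 2 * (d xs - d (x (k + 1)))
        ≤ θ (k + 1) ^ 2 * (c ^ 2 * (d xs - d (x 0))) := by
      nlinarith [norm_nonneg (θ (k + 1) • x (k + 1) - (θ (k + 1) - 1) • x k - xs),
        mul_le_mul_of_nonneg_left hEB2 hL.le,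
        mul_le_mul_of_nonneg_right (pow_le_pow_left₀ hκ hκθ 2) hgap0]
    exact le_of_mul_le_mul_left this (by positivity)

end ProjectedGradient

theorem stmt_16_general {n p : ℕ}
    (f : EuclideanSpace ℝ (Fin n) → ℝ) (σf : ℝ) (hσf : 0 < σf)
    (hfsc : StrongConvexOn Set.univ σf f)
    (U : Set (EuclideanSpace ℝ (Fin n))) (hUcv : Convex ℝ U)
    (G : EuclideanSpace ℝ (Fin n) →L[ℝ] EuclideanSpace ℝ (Fin p)) (hG : G ≠ 0) (g : EuclideanSpace ℝ (Fin p))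
    (K : Set (EuclideanSpace ℝ (Fin p)))
    (Kstar : Set (EuclideanSpace ℝ (Fin p)))
    (hKstar : Kstar = {x : EuclideanSpace ℝ (Fin p) | ∀ v ∈ K, 0 ≤ ⟪x, v⟫})
    (Lag : EuclideanSpace ℝ (Fin n) → EuclideanSpace ℝ (Fin p) → ℝ)
    (hLag : ∀ u x, Lag u x = f u + ⟪x, -(G u) - g⟫)
    (uu : EuclideanSpace ℝ (Fin p) → EuclideanSpace ℝ (Fin n))
    (huu : ∀ x : EuclideanSpace ℝ (Fin p), uu x ∈ U ∧ ∀ u ∈ U, Lag (uu x) x ≤ Lag u x)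
    (d : EuclideanSpace ℝ (Fin p) → ℝ) (hd : ∀ x, d x = Lag (uu x) x)
    (ustar : EuclideanSpace ℝ (Fin n))
    (hustar : ustar ∈ U ∧ G ustar + g ∈ K ∧ ∀ u ∈ U, G u + g ∈ K → f ustar ≤ f u)
    (fstar : ℝ) (hfstar : fstar = f ustar)
    (Xstar : Set (EuclideanSpace ℝ (Fin p))) (hXstar : Xstar = {x ∈ Kstar | d x = fstar})
    (Ld : ℝ) (hLd : Ld = ‖G‖ ^ 2 / σf)
    (projKs : EuclideanSpace ℝ (Fin p) → EuclideanSpace ℝ (Fin p))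
    (hprojKs : ∀ z : EuclideanSpace ℝ (Fin p), projKs z ∈ Kstar ∧ ∀ w ∈ Kstar, ‖z - projKs z‖ ≤ ‖z - w‖)
    (projX : EuclideanSpace ℝ (Fin p) → EuclideanSpace ℝ (Fin p))
    (hprojX : ∀ z : EuclideanSpace ℝ (Fin p), projX z ∈ Xstar ∧ ∀ w ∈ Xstar, ‖z - projX z‖ ≤ ‖z - w‖)
    (θ : ℕ → ℝ) (hθ0 : θ 0 = 0) (hθ1 : θ 1 = 1)
    (hθrec : ∀ k, 1 ≤ k → θ (k + 1) = (1 + Real.sqrt (1 + 4 * θ k ^ 2)) / 2)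
    (Kc : ℕ) (X Y : ℕ → ℕ → EuclideanSpace ℝ (Fin p)) (hX00 : X 0 0 ∈ Kstar)
    (hYinit : ∀ j, Y j 1 = X j 0)
    (hXrec : ∀ j k, 1 ≤ k →
      X j k = projKs (Y j k + (1 / Ld) • (-(G (uu (Y j k))) - g)))
    (hYrec : ∀ j k, 1 ≤ k →
      Y j (k + 1) = X j k + ((θ k - 1) / θ (k + 1)) • (X j k - X j (k - 1)))
    (hrestart : ∀ j, X (j + 1) 0 = X j Kc)
    (κ : ℝ) (hκ : 0 < κ) (hMpos : 0 < fstar - d (X 0 0))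
    (hEB : ∀ z ∈ Kstar, fstar - d z ≤ fstar - d (X 0 0) →
      ‖z - projX z‖ ≤ κ * ‖projKs (z + (1 / Ld) • (-(G (uu z)) - g)) - z‖) :
    ∀ c : ℝ, 0 < c → c < 1 → 2 * κ / c ≤ (Kc : ℝ) + 1 →
      ∀ q : ℕ, fstar - d (X q 0) ≤ c ^ (2 * q) * (fstar - d (X 0 0)) := by
  intro c hc0 hc1 hKc
  obtain rfl : Lag = lagrangian f G g := funext fun u ↦ funext (hLag u)
  have hL : 0 < Ld := hLd ▸ div_pos (pow_pos (norm_pos_iff.2 hG) 2) hσf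
  have hS : Convex ℝ Kstar := hKstar ▸ convex_dualCone K
  have hdual : IsSmoothConcave Ld d fun x ↦ -(G (uu x)) - g := by
    rw [show d = _ from funext hd, hLd]
    exact isSmoothConcave_dual hσf (hfsc.subset (Set.subset_univ U) hUcv) huu
  have hweak : ∀ x ∈ Kstar, d x ≤ fstar := fun x hx ↦
    hd x ▸ hfstar ▸ lagrangian_le_of_feasible huu (by rwa [hKstar] at hx) hustar.1 hustar.2.1
  have hopt : ∀ z, projX z ∈ Kstar ∧ d (projX z) = fstar := fun z ↦ by
    simpa only [hXstar, Set.mem_ofPred_eq] using (hprojX z).1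
  have hrun : ∀ j, IsFistaRun projKs (fun x ↦ -(G (uu x)) - g) Ld θ (X j) (Y j) := fun j ↦
    ⟨hYinit j, fun k ↦ hXrec j (k + 1) k.succ_pos,
      fun k ↦ by simpa only [Nat.add_sub_cancel] using hYrec j (k + 1) k.succ_pos⟩
  have hmem : ∀ q, X q 0 ∈ Kstar := fun q ↦ by
    induction q with
    | zero => exact hX00
    | succ q ih => exact hrestart q ▸ (hrun q).mem hprojKs ih Kc
  have hcontract : ∀ q, fstar - d (X q 0) ≤ fstar - d (X 0 0) →
      fstar - d (X (q + 1) 0) ≤ c ^ 2 * (fstar - d (X q 0)) := fun q hq ↦ by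
    obtain ⟨hxsS, hxsd⟩ := hopt (X q 0)
    rw [hrestart, ← hxsd]
    exact hdual.fista_restart_contraction hL hS hprojKs ⟨hθ0, hθ1, hθrec⟩ (hrun q) (hmem q) hxsS
      (isMaxOn_iff.2 fun x hx ↦ hxsd ▸ hweak x hx) hκ.le hc0 hc1 hKc (hEB _ (hmem q) hq)
  intro q
  rw [pow_mul]
  exact le_pow_mul_of_forall_le_mul (a := fun q ↦ fstar - d (X q 0)) (sq_nonneg c)
    (pow_le_one₀ hc0.le hc1.le) hMpos.le hcontract q

theorem stmt_16 {n p : ℕ}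
    (f : EuclideanSpace ℝ (Fin n) → ℝ) (σf : ℝ) (hσf : 0 < σf)
    (hfc : Continuous f) (hfsc : StrongConvexOn Set.univ σf f)
    (U : Set (EuclideanSpace ℝ (Fin n))) (hUne : U.Nonempty) (hUcl : IsClosed U) (hUcv : Convex ℝ U)
    (G : EuclideanSpace ℝ (Fin n) →L[ℝ] EuclideanSpace ℝ (Fin p)) (hG : G ≠ 0) (g : EuclideanSpace ℝ (Fin p))
    (K : Set (EuclideanSpace ℝ (Fin p))) (hKne : K.Nonempty) (hKcl : IsClosed K) (hKcv : Convex ℝ K)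
    (hKcone : ∀ c : ℝ, 0 ≤ c → ∀ v ∈ K, c • v ∈ K)
    (Kstar : Set (EuclideanSpace ℝ (Fin p)))
    (hKstar : Kstar = {x : EuclideanSpace ℝ (Fin p) | ∀ v ∈ K, 0 ≤ ⟪x, v⟫})
    (Lag : EuclideanSpace ℝ (Fin n) → EuclideanSpace ℝ (Fin p) → ℝ)
    (hLag : ∀ u x, Lag u x = f u + ⟪x, -(G u) - g⟫)
    (uu : EuclideanSpace ℝ (Fin p) → EuclideanSpace ℝ (Fin n))
    (huu : ∀ x : EuclideanSpace ℝ (Fin p), uu x ∈ U ∧ ∀ u ∈ U, Lag (uu x) x ≤ Lag u x)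
    (d : EuclideanSpace ℝ (Fin p) → ℝ) (hd : ∀ x, d x = Lag (uu x) x)
    (ustar : EuclideanSpace ℝ (Fin n))
    (hustar : ustar ∈ U ∧ G ustar + g ∈ K ∧ ∀ u ∈ U, G u + g ∈ K → f ustar ≤ f u)
    (fstar : ℝ) (hfstar : fstar = f ustar)
    (Xstar : Set (EuclideanSpace ℝ (Fin p))) (hXstar : Xstar = {x ∈ Kstar | d x = fstar})
    (hXne : Xstar.Nonempty)
    (Ld : ℝ) (hLd : Ld = ‖G‖ ^ 2 / σf)
    (projKs : EuclideanSpace ℝ (Fin p) → EuclideanSpace ℝ (Fin p))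
    (hprojKs : ∀ z : EuclideanSpace ℝ (Fin p), projKs z ∈ Kstar ∧ ∀ w ∈ Kstar, ‖z - projKs z‖ ≤ ‖z - w‖)
    (projX : EuclideanSpace ℝ (Fin p) → EuclideanSpace ℝ (Fin p))
    (hprojX : ∀ z : EuclideanSpace ℝ (Fin p), projX z ∈ Xstar ∧ ∀ w ∈ Xstar, ‖z - projX z‖ ≤ ‖z - w‖)
    (θ : ℕ → ℝ) (hθ0 : θ 0 = 0) (hθ1 : θ 1 = 1)
    (hθrec : ∀ k, 1 ≤ k → θ (k + 1) = (1 + Real.sqrt (1 + 4 * θ k ^ 2)) / 2)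
    (Kc : ℕ) (X Y : ℕ → ℕ → EuclideanSpace ℝ (Fin p)) (hX00 : X 0 0 ∈ Kstar)
    (hYinit : ∀ j, Y j 1 = X j 0)
    (hXrec : ∀ j k, 1 ≤ k →
      X j k = projKs (Y j k + (1 / Ld) • (-(G (uu (Y j k))) - g)))
    (hYrec : ∀ j k, 1 ≤ k →
      Y j (k + 1) = X j k + ((θ k - 1) / θ (k + 1)) • (X j k - X j (k - 1)))
    (hrestart : ∀ j, X (j + 1) 0 = X j Kc)
    (κ : ℝ) (hκ : 0 < κ) (hMpos : 0 < fstar - d (X 0 0))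
    (hEB : ∀ z ∈ Kstar, fstar - d z ≤ fstar - d (X 0 0) →
      ‖z - projX z‖ ≤ κ * ‖projKs (z + (1 / Ld) • (-(G (uu z)) - g)) - z‖) :
    ∀ c : ℝ, 0 < c → c < 1 → 2 * κ / c ≤ (Kc : ℝ) + 1 →
      ∀ q : ℕ, fstar - d (X q 0) ≤ c ^ (2 * q) * (fstar - d (X 0 0)) :=
  stmt_16_general f σf hσf hfsc U hUcv G hG g K Kstar hKstar Lag hLag uu huu d hd ustar hustar fstar
    hfstar Xstar hXstar Ld hLd projKs hprojKs projX hprojX θ hθ0 hθ1 hθrec Kc X Y hX00 hYinit hXrec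
    hYrec hrestart κ hκ hMpos hEB
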